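/- arXiv:2403.14848 — 2 statements merged into one kernel-verified Lean document; each statement's English description precedes it below -/
import Mathlib

section
/- (Case 5a of the SP-WENO case analysis.) Assume Δz_{i+1/2} ≠ 0, θ_i^+ = 1, and θ_{i+1}^- > 1, and that the weights are consistent (-3/8 ≤ C_1, C_2 ≤ 1/8). Then the sign-property constraint w̃_0(1 - θ_{i+1}^-) + w_1(1 - θ_i^+) ≥ 0 holds if and only if C_2 = 1/8 (equivalently w̃_0 = 0); in particular C_1 is unconstrained beyond consistency. -/
theorem mul_nonneg_iff_eq_zero_of_nonneg_of_neg {R : Type*} [Ring R] [LinearOrder R]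
    [IsStrictOrderedRing R] {a b : R} (ha : 0 ≤ a) (hb : b < 0) : 0 ≤ a * b ↔ a = 0 := by
  refine ⟨fun h => le_antisymm ?_ ha, fun h => by rw [h, zero_mul]⟩
  exact nonpos_of_mul_nonneg_left h hb

theorem sp_weno_case5a_general (zm z0 z1 z2 C1 C2 : ℝ)
    (hθp : (z0 - zm)/(z1 - z0) = 1) (hθm : (z2 - z1)/(z1 - z0) > 1)
    (hC2u : C2 ≤ 1/8) :
    (1/4 - 2*C2)*(1 - (z2 - z1)/(z1 - z0))
        + (1/4 - 2*C1)*(1 - (z0 - zm)/(z1 - z0)) ≥ 0 ↔ C2 = 1/8 := by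
  rw [hθp, sub_self, mul_zero, add_zero, ge_iff_le,
    mul_nonneg_iff_eq_zero_of_nonneg_of_neg (by linarith) (by linarith)]
  constructor <;> intro h <;> linarith

/-- Case 5a of the SP-WENO case analysis: if `Δz_{i+1/2} ≠ 0`,
`θ⁺_i = 1`, `θ⁻_{i+1} > 1` and the weights are consistent
(`-3/8 ≤ C₁, C₂ ≤ 1/8`), then the sign-property constraint
`w̃₀(1 - θ⁻_{i+1}) + w₁(1 - θ⁺_i) ≥ 0` holds iff `C₂ = 1/8`
(equivalently `w̃₀ = 0`); `C₁` is unconstrained beyond consistency. -/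
theorem sp_weno_case5a (zm z0 z1 z2 C1 C2 : ℝ) (hΔ : z1 - z0 ≠ 0)
    (hθp : (z0 - zm)/(z1 - z0) = 1) (hθm : (z2 - z1)/(z1 - z0) > 1)
    (hC1l : -(3/8) ≤ C1) (hC1u : C1 ≤ 1/8)
    (hC2l : -(3/8) ≤ C2) (hC2u : C2 ≤ 1/8) :
    (1/4 - 2*C2)*(1 - (z2 - z1)/(z1 - z0))
        + (1/4 - 2*C1)*(1 - (z0 - zm)/(z1 - z0)) ≥ 0 ↔ C2 = 1/8 :=
  sp_weno_case5a_general zm z0 z1 z2 C1 C2 hθp hθm hC2u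
end

section
/- (SP-WENOc perturbation identity.) Assume Δz_{i+1/2} ≠ 0, θ_i^+ ≠ 1, and θ_{i+1}^- ≠ 1. Given any perturbations C_1, C_2 and any real G, the modified perturbations C̄_1 = C_1 - G/(4(1 - θ_i^+)) and C̄_2 = C_2 - G/(4(1 - θ_{i+1}^-)) produce the reconstructed jump ⟦z⟧_{i+1/2}(C̄_1, C̄_2) = (1/2)·[w̃_0(1 - θ_{i+1}^-) + w_1(1 - θ_i^+) + G]·Δz_{i+1/2}, where w_1 = 1/4 - 2C_1 and w̃_0 = 1/4 - 2C_2 are computed from the original perturbations. In particular, if w̃_0(1 - θ_{i+1}^-) + w_1(1 - θ_i^+) ≥ 0 and G ≥ 0, the modified reconstruction still satisfies the sign property ⟦z⟧_{i+1/2}·Δz_{i+1/2} ≥ 0. -/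
/-!
Writing `w₀ = 1 - w₁` and `w̃₁ = 1 - w̃₀`, the reconstructed jump is
`(w̃₀ (1 - θ⁻) + w₁ (1 - θ⁺)) Δz / 2`, i.e. affine in each perturbation with slope
proportional to `1 - θ`. Shifting `Cₖ` by `G / (4 (1 - θ))` therefore adds exactly `G Δz / 4`
per side, and the sign property follows from `(s + G) Δz² ≥ 0`.
-/

/-- `⟦z⟧_{i+1/2}(C₁, C₂)`, with `zm, z₀, z₁, z₂` standing for `z_{i-1}, z_i, z_{i+1}, z_{i+2}`. -/
noncomputable def reconJump (C₁ C₂ zm z₀ z₁ z₂ : ℝ) : ℝ :=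
  ((1/4 - 2*C₂)*(3*z₁ - z₂) + (3/4 + 2*C₂)*(z₀ + z₁))/2
    - ((3/4 + 2*C₁)*(z₀ + z₁) + (1/4 - 2*C₁)*(3*z₀ - zm))/2

section

variable (C₁ C₂ : ℝ) {zm z₀ z₁ z₂ : ℝ}

theorem reconJump_eq_weighted_second_differences :
    reconJump C₁ C₂ zm z₀ z₁ z₂
      = ((1/4 - 2*C₂)*(2*z₁ - z₀ - z₂) + (1/4 - 2*C₁)*(z₁ - 2*z₀ + zm))/2 := by
  unfold reconJump
  ring

theorem reconJump_eq_jump_ratios (hΔ : z₁ - z₀ ≠ 0) :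
    reconJump C₁ C₂ zm z₀ z₁ z₂
      = (1/2) * ((1/4 - 2*C₂)*(1 - (z₂ - z₁)/(z₁ - z₀))
          + (1/4 - 2*C₁)*(1 - (z₀ - zm)/(z₁ - z₀))) * (z₁ - z₀) := by
  rw [reconJump_eq_weighted_second_differences]
  field_simp
  ring

theorem perturbed_weight_mul (C G : ℝ) {a : ℝ} (ha : a ≠ 0) :
    (1/4 - 2*(C - G/(4*a))) * a = (1/4 - 2*C) * a + G/2 := by
  field_simp
  ring

theorem reconJump_perturbed (G : ℝ) (hΔ : z₁ - z₀ ≠ 0)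
    (hp : 1 - (z₀ - zm)/(z₁ - z₀) ≠ 0) (hm : 1 - (z₂ - z₁)/(z₁ - z₀) ≠ 0) :
    reconJump (C₁ - G/(4*(1 - (z₀ - zm)/(z₁ - z₀)))) (C₂ - G/(4*(1 - (z₂ - z₁)/(z₁ - z₀))))
        zm z₀ z₁ z₂
      = (1/2) * ((1/4 - 2*C₂)*(1 - (z₂ - z₁)/(z₁ - z₀))
          + (1/4 - 2*C₁)*(1 - (z₀ - zm)/(z₁ - z₀)) + G) * (z₁ - z₀) := by
  rw [reconJump_eq_jump_ratios _ _ hΔ, perturbed_weight_mul _ _ hp, perturbed_weight_mul _ _ hm]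
  ring

end

/-- SP-WENOc perturbation identity: assume `Δz_{i+1/2} ≠ 0`,
`θ⁺_i ≠ 1`, `θ⁻_{i+1} ≠ 1`. Then for any perturbations `C₁, C₂` and any real
`G`, the modified perturbations `C̄₁ = C₁ - G/(4(1 - θ⁺_i))` and
`C̄₂ = C₂ - G/(4(1 - θ⁻_{i+1}))` produce the reconstructed jump
`(1/2)[w̃₀(1 - θ⁻_{i+1}) + w₁(1 - θ⁺_i) + G]·Δz_{i+1/2}` with
`w₁ = 1/4 - 2C₁`, `w̃₀ = 1/4 - 2C₂` computed from the original perturbations;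
in particular if the original sign-property constraint is nonnegative and
`G ≥ 0`, then the modified jump still satisfies the sign property. -/
theorem sp_wenoc_perturbation (zm z0 z1 z2 C1 C2 G : ℝ) (hΔ : z1 - z0 ≠ 0)
    (hθp : (z0 - zm)/(z1 - z0) ≠ 1) (hθm : (z2 - z1)/(z1 - z0) ≠ 1) :
    (((1/4 - 2*(C2 - G/(4*(1 - (z2 - z1)/(z1 - z0)))))*(3*z1 - z2)
        + (3/4 + 2*(C2 - G/(4*(1 - (z2 - z1)/(z1 - z0)))))*(z0 + z1))/2
      - ((3/4 + 2*(C1 - G/(4*(1 - (z0 - zm)/(z1 - z0)))))*(z0 + z1)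
        + (1/4 - 2*(C1 - G/(4*(1 - (z0 - zm)/(z1 - z0)))))*(3*z0 - zm))/2)
    = (1/2) * ((1/4 - 2*C2)*(1 - (z2 - z1)/(z1 - z0))
             + (1/4 - 2*C1)*(1 - (z0 - zm)/(z1 - z0)) + G) * (z1 - z0) ∧
    ((1/4 - 2*C2)*(1 - (z2 - z1)/(z1 - z0))
        + (1/4 - 2*C1)*(1 - (z0 - zm)/(z1 - z0)) ≥ 0 → G ≥ 0 →
      (((1/4 - 2*(C2 - G/(4*(1 - (z2 - z1)/(z1 - z0)))))*(3*z1 - z2)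
          + (3/4 + 2*(C2 - G/(4*(1 - (z2 - z1)/(z1 - z0)))))*(z0 + z1))/2
        - ((3/4 + 2*(C1 - G/(4*(1 - (z0 - zm)/(z1 - z0)))))*(z0 + z1)
          + (1/4 - 2*(C1 - G/(4*(1 - (z0 - zm)/(z1 - z0)))))*(3*z0 - zm))/2)
        * (z1 - z0) ≥ 0) := by
  have key := reconJump_perturbed C1 C2 G hΔ (sub_ne_zero.mpr hθp.symm) (sub_ne_zero.mpr hθm.symm)
  unfold reconJump at key
  refine ⟨key, fun hs hG => ?_⟩
  rw [key, mul_assoc]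
  exact mul_nonneg (mul_nonneg (by norm_num) (add_nonneg hs hG)) (mul_self_nonneg _)
end
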